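/- arXiv:2105.03928 — 3 statements merged into one kernel-verified Lean document; each statement's English description precedes it below -/
import Mathlib

section
/- Let n ≥ 1 and k ≥ 1 be natural numbers, and let r_1, …, r_k be nonnegative integers with total sum M = r_1 + ⋯ + r_k. Then the product of multiset coefficients satisfies ∏_{j=1}^{k} multichoose(n, r_j) ≤ ( ∏_{t=1}^{n−1} (M/k + t) )^k / ((n − 1)!)^k, where M/k denotes the real quotient. -/
lemma choose_mul_factorial_eq_prod (m r : ℕ) :
    (m + r).choose r * m.factorial = ∏ t ∈ Finset.Icc 1 m, (r + t) := by
  induction m with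
  | zero => simp
  | succ m ih =>
    rw [Finset.prod_Icc_succ_top (Nat.le_add_left 1 m), ← ih, Nat.factorial_succ]
    have h1 : (m + 1 + r).choose r = (m + r + 1).choose (m + 1) := by
      have := Nat.choose_symm (n := m + r + 1) (k := m + 1) (by omega)
      simpa [show m + r + 1 - (m + 1) = r by omega, show m + 1 + r = m + r + 1 by omega]
        using this
    have h2 : (m + r).choose m = (m + r).choose r := by
      have := Nat.choose_symm (n := m + r) (k := r) (by omega)
      simpa using this
    have h3 := Nat.add_one_mul_choose_eq (m + r) m
    rw [h1]
    calc (m + r + 1).choose (m + 1) * ((m + 1) * m.factorial)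
        = ((m + r).succ * (m + r).choose m) * m.factorial := by
          rw [h3]; ring
      _ = (m + r).choose r * m.factorial * (r + (m + 1)) := by
          rw [h2, Nat.succ_eq_add_one]; ring

/-- Inequality of arithmetic and geometric multiset-coefficient means
(Lemma 2): for `n ≥ 1`, `k ≥ 1` and nonnegative integers `r_1, …, r_k`
with sum `M`, the product of the multiset coefficients
`multichoose n r_j = C(n + r_j - 1, r_j)` is at most
`(∏_{t=1}^{n-1} (M/k + t))^k / ((n-1)!)^k`. -/
theorem prod_multiset_coefficient_le (n k : ℕ) (hn : 1 ≤ n) (hk : 1 ≤ k)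
    (r : Fin k → ℕ) (M : ℕ) (hM : M = ∑ j, r j) :
    (∏ j, ((n + r j - 1).choose (r j) : ℝ)) ≤
      (∏ t ∈ Finset.Icc 1 (n - 1), ((M : ℝ) / (k : ℝ) + (t : ℝ))) ^ k
        / ((Nat.factorial (n - 1) : ℝ)) ^ k := by
  set m := n - 1 with hm
  have hkpos : (0 : ℝ) < k := by exact_mod_cast hk
  have hch : ∀ j, ((n + r j - 1).choose (r j) : ℝ)
      = (∏ t ∈ Finset.Icc 1 m, ((r j : ℝ) + t)) / m.factorial := by
    intro j
    have hidx : n + r j - 1 = m + r j := by omega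
    have := choose_mul_factorial_eq_prod m (r j)
    have hcast : ((m + r j).choose (r j) : ℝ) * m.factorial
        = ∏ t ∈ Finset.Icc 1 m, ((r j : ℝ) + t) := by
      exact_mod_cast congrArg (Nat.cast : ℕ → ℝ) this
    rw [hidx, eq_div_iff (by positivity), hcast]
  simp_rw [hch]
  rw [Finset.prod_div_distrib, Finset.prod_const, Finset.card_univ, Fintype.card_fin]
  gcongr
  rw [Finset.prod_comm, ← Finset.prod_pow]
  apply Finset.prod_le_prod
  · intro t _; positivity
  intro t _
  -- AM-GM for each t
  have hw : ∀ j ∈ (Finset.univ : Finset (Fin k)), (0:ℝ) ≤ 1 / k := fun _ _ => by positivity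
  have hw1 : ∑ _j : Fin k, (1:ℝ) / k = 1 := by
    rw [Finset.sum_const, Finset.card_univ, Fintype.card_fin, nsmul_eq_mul]
    field_simp
  have hz : ∀ j ∈ (Finset.univ : Finset (Fin k)), (0:ℝ) ≤ (r j : ℝ) + t := fun j _ => by
    positivity
  have key := Real.geom_mean_le_arith_mean_weighted Finset.univ (fun _ => 1 / (k:ℝ))
    (fun j => (r j : ℝ) + t) hw hw1 hz
  have hsum : ∑ j : Fin k, (1 / (k:ℝ)) * ((r j : ℝ) + t) = (M : ℝ) / k + t := by
    rw [← Finset.mul_sum, Finset.sum_add_distrib, Finset.sum_const, Finset.card_univ,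
      Fintype.card_fin, nsmul_eq_mul]
    have : ((M : ℝ)) = ∑ j : Fin k, (r j : ℝ) := by rw [hM]; push_cast; rfl
    rw [← this]
    field_simp
  rw [hsum] at key
  have hrw : (∏ j : Fin k, ((r j : ℝ) + t) ^ ((1:ℝ) / k)) ^ k
      = ∏ j : Fin k, ((r j : ℝ) + t) := by
    rw [← Finset.prod_pow]
    apply Finset.prod_congr rfl
    intro j _
    rw [← Real.rpow_natCast (((r j : ℝ) + t) ^ ((1:ℝ)/k)) k,
      ← Real.rpow_mul (by positivity)]
    rw [one_div, inv_mul_cancel₀ (by positivity), Real.rpow_one]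
  calc ∏ j : Fin k, ((r j : ℝ) + t)
      = (∏ j : Fin k, ((r j : ℝ) + t) ^ ((1:ℝ) / k)) ^ k := hrw.symm
    _ ≤ ((M : ℝ) / k + t) ^ k := by
        apply pow_le_pow_left₀ (Finset.prod_nonneg (fun j _ => by positivity)) key
end

section
/- Let A be an m × d real matrix and λ a natural number. Then the λ-th Hadamard power of the Gram matrix A·Aᵀ has rank at most multichoose(d, λ) = C(d + λ − 1, λ). -/
open Matrix Finset

/-- The `λ`-th Hadamard power of the Gram matrix `A·Aᵀ` of an `m × d` real matrix
has rank at most the multiset coefficient `multichoose d λ = C(d + λ - 1, λ)`. -/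
theorem rank_hadamardPow_gram_le (m d lam : ℕ) (A : Matrix (Fin m) (Fin d) ℝ) :
    (Matrix.of fun α β : Fin m => ((A * Aᵀ) α β) ^ lam).rank ≤ (d + lam - 1).choose lam := by
  set I := piAntidiag (univ : Finset (Fin d)) lam with hI
  -- factor the matrix through the index set `I`
  set B : Matrix (Fin m) I ℝ := Matrix.of fun α k =>
    (Nat.multinomial univ k.1 : ℝ) * ∏ i, A α i ^ k.1 i with hB
  set C : Matrix I (Fin m) ℝ := Matrix.of fun k β => ∏ i, A β i ^ k.1 i with hC
  have hfac : (Matrix.of fun α β : Fin m => ((A * Aᵀ) α β) ^ lam) = B * C := by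
    ext α β
    simp only [Matrix.mul_apply, Matrix.of_apply, Matrix.transpose_apply, hB, hC]
    rw [Finset.sum_pow_eq_sum_piAntidiag]
    rw [← Finset.sum_attach (piAntidiag (univ : Finset (Fin d)) lam)
      (fun k => (Nat.multinomial univ k : ℝ) * ∏ i, (A α i * A β i) ^ k i)]
    refine Finset.sum_congr rfl fun k _ => ?_
    rw [mul_assoc]
    congr 1
    rw [← Finset.prod_mul_distrib]
    exact Finset.prod_congr rfl fun i _ => (mul_pow _ _ _)
  have hcard : Fintype.card I ≤ (d + lam - 1).choose lam := by
    have hsym : Fintype.card (Sym (Fin d) lam) = (d + lam - 1).choose lam := by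
      rw [Sym.card_sym_eq_multichoose, Fintype.card_fin, Nat.multichoose_eq]
    rw [← hsym]
    refine Fintype.card_le_of_injective
      (fun k => ⟨∑ i, Multiset.replicate (k.1 i) i, by
        simp [map_sum, Multiset.card_replicate, (Finset.mem_piAntidiag.mp k.2).1]⟩) ?_
    rintro ⟨f, hf⟩ ⟨g, hg⟩ h
    have h' := congrArg Sym.toMultiset h
    simp only [Sym.coe_mk] at h'
    ext i
    have := congrArg (Multiset.count i) h'
    simpa [Multiset.count_sum', Multiset.count_replicate] using this
  calc (Matrix.of fun α β : Fin m => ((A * Aᵀ) α β) ^ lam).rank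
      = (B * C).rank := by rw [hfac]
    _ ≤ B.rank := Matrix.rank_mul_le_left B C
    _ ≤ Fintype.card I := B.rank_le_card_width
    _ ≤ _ := hcard
end

section
/- Let α be a type, N a positive natural number, and let P and Q be disjoint subsets of {1, …, N} whose union is {1, …, N}. Let y : ({1, …, N} → α) → ℝ be a function that admits a decomposition y(x) = Σ_{k=1}^{R} g_k(x restricted to P) · h_k(x restricted to Q) for some R ∈ ℕ and functions g_k : (P → α) → ℝ, h_k : (Q → α) → ℝ. Then for any natural number Z and any template elements x^{(1)}, …, x^{(Z)} ∈ α, the grid matrix M, indexed by pairs (u, v) where u : P → {1, …, Z} and v : Q → {1, …, Z}, defined by M(u, v) = y of the input that assigns x^{(u(j))} to each position j ∈ P and x^{(v(j))} to each position j ∈ Q, has rank at most R. -/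
/-- Grid tensors lower-bound the separation rank: if
`y(x) = ∑_{k=1}^R g_k(x|_P) · h_k(x|_Q)` for a partition `(P, Q)` of the `N`
positions, then for any template elements `x^{(1)}, …, x^{(Z)}`, the grid matrix
`M(u, v) = y(input assigning x^{(u(j))} to j ∈ P and x^{(v(j))} to j ∈ Q)`
has rank at most `R`. -/
theorem rank_grid_matrix_le_sep_rank (α : Type*) (N : ℕ) (hN : 0 < N)
    (P Q : Finset (Fin N)) (hdisj : Disjoint P Q) (hunion : P ∪ Q = Finset.univ)
    (y : (Fin N → α) → ℝ) (R : ℕ)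
    (g : Fin R → ((↥P → α) → ℝ)) (h : Fin R → ((↥Q → α) → ℝ))
    (hy : ∀ x : Fin N → α,
      y x = ∑ k, g k (fun j : ↥P => x j) * h k (fun j : ↥Q => x j))
    (Z : ℕ) (xt : Fin Z → α) :
    (Matrix.of fun (u : ↥P → Fin Z) (v : ↥Q → Fin Z) =>
        y (fun j : Fin N =>
          if hj : j ∈ P then xt (u ⟨j, hj⟩)
          else xt (v ⟨j, by
            rcases Finset.mem_union.mp (hunion ▸ Finset.mem_univ j) with h' | h'
            · exact absurd h' hj
            · exact h'⟩))).rank ≤ R := by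
  set A : Matrix (↥P → Fin Z) (Fin R) ℝ :=
    Matrix.of fun u k => g k (fun j => xt (u j)) with hA
  set B : Matrix (Fin R) (↥Q → Fin Z) ℝ :=
    Matrix.of fun k v => h k (fun j => xt (v j)) with hB
  have hM : (Matrix.of fun (u : ↥P → Fin Z) (v : ↥Q → Fin Z) =>
        y (fun j : Fin N =>
          if hj : j ∈ P then xt (u ⟨j, hj⟩)
          else xt (v ⟨j, by
            rcases Finset.mem_union.mp (hunion ▸ Finset.mem_univ j) with h' | h'
            · exact absurd h' hj
            · exact h'⟩))) = A * B := by
    ext u v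
    rw [Matrix.mul_apply]
    simp only [Matrix.of_apply, hA, hB]
    rw [hy]
    congr 1
    ext k
    congr 1
    · congr 1
      funext j
      have hj : (j : Fin N) ∈ P := j.2
      simp [hj]
    · congr 1
      funext j
      have hjQ : (j : Fin N) ∈ Q := j.2
      have hjP : (j : Fin N) ∉ P := fun hp =>
        (Finset.disjoint_left.mp hdisj hp) hjQ
      simp [hjP]
  rw [hM]
  calc (A * B).rank ≤ B.rank := Matrix.rank_mul_le_right A B
    _ ≤ Fintype.card (Fin R) := B.rank_le_card_height
    _ = R := Fintype.card_fin R
end
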